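/- For every n ≥ 2 and every integer k with 0 ≤ k ≤ 2√n, one has e^n/(28√n) ≤ n^{n-k}/(n-k)! ≤ e^n/√((8π/5)·n). -/

import Mathlib

/-!
Since `j ↦ n ^ j / j!` increases on `[0, n]`, the upper bound reduces to `j = n`, where it is
Stirling's lower bound `√(2πn) (n/e)^n ≤ n!`. For the lower bound, with `m = n - k`, the upper
bound `m! ≤ e √m (m/e)^m` (the Stirling sequence decreases from its first term `e / √2`) reduces
the claim to `e^(k+1) (1 - k/n)^m ≤ 28`. Three terms of the series of `log (1 - t)` give
`k + m log (1 - k/n) ≤ 9/4` once `n ≥ 64`, and `e^(13/4) < 28`; the cases `n < 64` are checked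
exactly.
-/

open Real Finset
open scoped Nat

theorem sum_range_pow_div_le_neg_log_one_sub {t : ℝ} (h0 : 0 ≤ t) (h1 : t < 1) (N : ℕ) :
    ∑ i ∈ range N, t ^ (i + 1) / (i + 1) ≤ -log (1 - t) :=
  sum_le_hasSum _ (fun i _ => by positivity)
    (hasSum_pow_div_log_of_abs_lt_one (by rwa [abs_of_nonneg h0]))

theorem add_one_sub_mul_log_one_sub_le {t : ℝ} (h0 : 0 ≤ t) (h1 : t < 1) :
    t + (1 - t) * log (1 - t) ≤ t ^ 2 / 2 + t ^ 3 / 6 + t ^ 4 / 3 := by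
  have hlog := sum_range_pow_div_le_neg_log_one_sub h0 h1 3
  simp only [sum_range_succ, sum_range_zero] at hlog
  norm_num at hlog
  nlinarith [mul_le_mul_of_nonneg_left hlog (sub_nonneg.2 h1.le)]

theorem exp_thirteen_div_four_le : exp (13 / 4) ≤ 28 := by
  have h1 : exp (1 / 4) ≤ 4 / 3 := by
    have := exp_bound_div_one_sub_of_interval (x := 1 / 4) (by norm_num) (by norm_num)
    norm_num at this ⊢; linarith
  have he : exp (13 / 4) = exp 1 ^ 3 * exp (1 / 4) := by
    rw [← exp_nat_mul, ← exp_add]; norm_num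
  rw [he]
  calc exp 1 ^ 3 * exp (1 / 4) ≤ 2.7182818286 ^ 3 * (4 / 3) := by
        gcongr; exact exp_one_lt_d9.le
    _ ≤ 28 := by norm_num

theorem factorial_le_exp_one_mul_sqrt_mul_pow {n : ℕ} (hn : n ≠ 0) :
    (n ! : ℝ) ≤ exp 1 * √n * (n / exp 1) ^ n := by
  obtain ⟨m, rfl⟩ := Nat.exists_eq_succ_of_ne_zero hn
  have h : Stirling.stirlingSeq (m + 1) ≤ exp 1 / √2 := by
    simpa [Stirling.stirlingSeq_one] using Stirling.stirlingSeq'_antitone (Nat.zero_le m)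
  rw [Stirling.stirlingSeq, div_le_iff₀ (by positivity)] at h
  calc _ ≤ _ := h
    _ = _ := by rw [sqrt_mul (by norm_num)]; field_simp

theorem pow_div_factorial_le_pow_div_factorial {x : ℝ} {a b : ℕ} (hab : a ≤ b) (hbx : b ≤ x) :
    x ^ a / a ! ≤ x ^ b / b ! := by
  induction b, hab using Nat.le_induction with
  | base => rfl
  | succ c hac ih =>
    have hcx : (c : ℝ) + 1 ≤ x := by exact_mod_cast hbx
    have hx : 0 ≤ x := by linarith [c.cast_nonneg (α := ℝ)]
    calc x ^ a / a ! ≤ x ^ c / c ! := ih (by linarith)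
      _ ≤ x ^ c / c ! * (x / (c + 1)) :=
          le_mul_of_one_le_right (by positivity) ((one_le_div (by positivity)).2 hcx)
      _ = x ^ (c + 1) / (c + 1)! := by push_cast [Nat.factorial_succ]; field_simp; ring

theorem add_mul_log_one_sub_div_le {N x : ℝ} (hN : 64 ≤ N) (hx0 : 0 ≤ x) (hx : x ^ 2 ≤ 4 * N) :
    x + (N - x) * log (1 - x / N) ≤ 9 / 4 := by
  have hN0 : 0 < N := by linarith
  set t := x / N with ht
  have ht0 : 0 ≤ t := by positivity
  have ht4 : t ≤ 1 / 4 := by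
    rw [ht, div_le_iff₀ hN0]; nlinarith
  have hNt : N * t ^ 2 ≤ 4 := by
    rw [ht, div_pow, mul_div_assoc', div_le_iff₀ (by positivity)]; nlinarith
  have hxN : x = N * t := by rw [ht]; field_simp
  calc x + (N - x) * log (1 - t) = N * (t + (1 - t) * log (1 - t)) := by rw [hxN]; ring
    _ ≤ N * (t ^ 2 / 2 + t ^ 3 / 6 + t ^ 4 / 3) :=
        mul_le_mul_of_nonneg_left (add_one_sub_mul_log_one_sub_le ht0 (by linarith)) hN0.le
    _ = N * t ^ 2 * (1 / 2 + t / 6 + t ^ 2 / 3) := by ring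
    _ ≤ 4 * (1 / 2 + (1 / 4) / 6 + (1 / 4) ^ 2 / 3) := by gcongr
    _ = 9 / 4 := by norm_num

theorem exp_add_one_mul_div_pow_le {k m : ℕ} (hn : 64 ≤ k + m) (hk : k ^ 2 ≤ 4 * (k + m)) :
    exp (k + 1) * (m / (k + m)) ^ m ≤ 28 := by
  have hn' : (64 : ℝ) ≤ k + m := by exact_mod_cast hn
  have hk' : (k : ℝ) ^ 2 ≤ 4 * (k + m) := by exact_mod_cast hk
  have hm : (0 : ℝ) < m := by nlinarith
  have hlog := add_mul_log_one_sub_div_le hn' k.cast_nonneg hk'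
  have hsub : (1 : ℝ) - k / (k + m) = m / (k + m) := by field_simp; ring
  rw [hsub, add_sub_cancel_left] at hlog
  calc exp (k + 1) * (m / (k + m)) ^ m = exp (1 + (k + m * log (m / (k + m)))) := by
        rw [exp_add, exp_add, exp_add, exp_nat_mul, exp_log (by positivity)]; ring
    _ ≤ exp (13 / 4) := exp_le_exp.2 (by linarith)
    _ ≤ 28 := exp_thirteen_div_four_le

theorem exp_div_le_pow_div_factorial_of_sixtyFour_le {k m : ℕ} (hn : 64 ≤ k + m)
    (hk : k ^ 2 ≤ 4 * (k + m)) :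
    exp (k + m : ℕ) / (28 * √(k + m : ℕ)) ≤ ((k + m : ℕ) : ℝ) ^ m / m ! := by
  have hm : m ≠ 0 := by rintro rfl; nlinarith
  have hkey := exp_add_one_mul_div_pow_le hn hk
  push_cast
  rw [div_le_div_iff₀ (by positivity) (by positivity)]
  calc exp (k + m) * m ! ≤ exp (k + m) * (exp 1 * √(k + m) * (m / exp 1) ^ m) := by
        gcongr
        calc (m ! : ℝ) ≤ exp 1 * √m * (m / exp 1) ^ m := factorial_le_exp_one_mul_sqrt_mul_pow hm
          _ ≤ _ := by gcongr; linarith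
    _ = exp (k + 1) * (m / (k + m)) ^ m * (k + m) ^ m * √(k + m) := by
        rw [div_pow, div_pow, ← exp_nat_mul, exp_add, exp_add]
        field_simp
    _ ≤ 28 * (k + m) ^ m * √(k + m) := by gcongr
    _ = (k + m) ^ m * (28 * √(k + m)) := by ring

theorem pow_div_factorial_le_exp_div_sqrt {n : ℕ} (hn : n ≠ 0) :
    (n : ℝ) ^ n / n ! ≤ exp n / √(2 * π * n) := by
  have hstirling := Stirling.le_factorial_stirling n
  rw [div_pow, ← exp_nat_mul, mul_one] at hstirling
  rw [div_le_div_iff₀ (by positivity) (by positivity)]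
  calc (n : ℝ) ^ n * √(2 * π * n) = √(2 * π * n) * (n ^ n / exp n) * exp n := by
        field_simp
    _ ≤ n ! * exp n := by gcongr
    _ = exp n * n ! := mul_comm _ _

theorem exp_div_le_pow_div_factorial_of_nat_le {n m : ℕ} (hn : n ≠ 0)
    (h : 68 ^ (2 * n) * m ! ^ 2 ≤ 784 * n * n ^ (2 * m) * 25 ^ (2 * n)) :
    exp n / (28 * √n) ≤ (n : ℝ) ^ m / m ! := by
  have hexp : exp n ≤ (68 / 25) ^ n := by
    rw [← exp_one_pow]
    gcongr
    linarith [exp_one_lt_d9]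
  have hsq : ((68 / 25) ^ n * m !) ^ 2 ≤ ((n : ℝ) ^ m * (28 * √n)) ^ 2 := by
    have hcast : ((68 ^ (2 * n) * m ! ^ 2 : ℕ) : ℝ) ≤
        (784 * n * n ^ (2 * m) * 25 ^ (2 * n) : ℕ) := by
      exact_mod_cast h
    push_cast at hcast
    have hlhs : ((68 / 25 : ℝ) ^ n * m !) ^ 2 = 68 ^ (2 * n) * m ! ^ 2 / 25 ^ (2 * n) := by
      rw [div_pow]; field_simp; ring
    have hrhs : ((n : ℝ) ^ m * (28 * √n)) ^ 2 = 784 * n * n ^ (2 * m) := by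
      rw [mul_pow, mul_pow, sq_sqrt n.cast_nonneg]; ring
    rw [hlhs, hrhs, div_le_iff₀ (by positivity)]
    exact hcast
  rw [div_le_div_iff₀ (by positivity) (by positivity)]
  calc exp n * m ! ≤ (68 / 25) ^ n * m ! := by gcongr
    _ ≤ n ^ m * (28 * √n) :=
        (pow_le_pow_iff_left₀ (by positivity) (by positivity) two_ne_zero).1 hsq

/-- With `68/25 > e` and after squaring away `√n`, the lower bound for `n < 64` becomes this
inequality between natural numbers. -/
theorem sixtyEight_pow_mul_factorial_sq_le :
    ∀ n < 64, 2 ≤ n → ∀ k ≤ n, k ^ 2 ≤ 4 * n →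
      68 ^ (2 * n) * (n - k)! ^ 2 ≤ 784 * n * n ^ (2 * (n - k)) * 25 ^ (2 * n) := by
  decide

/-- For every `n ≥ 2` and integer `k` with `0 ≤ k ≤ 2√n`:
`e^n/(28√n) ≤ n^{n-k}/(n-k)! ≤ e^n/√((8π/5)·n)`. -/
theorem stirling_type_bounds (n k : ℕ) (hn : 2 ≤ n) (hk : (k : ℝ) ≤ 2 * Real.sqrt n) :
    Real.exp n / (28 * Real.sqrt n) ≤ (n : ℝ) ^ (n - k) / (Nat.factorial (n - k)) ∧
    (n : ℝ) ^ (n - k) / (Nat.factorial (n - k)) ≤ Real.exp n / Real.sqrt (8 * Real.pi / 5 * n) := by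
  have hk2 : k ^ 2 ≤ 4 * n := by
    have : (k : ℝ) ^ 2 ≤ 4 * n := by
      calc (k : ℝ) ^ 2 ≤ (2 * √(n : ℝ)) ^ 2 := by gcongr
        _ = 4 * (n : ℝ) := by rw [mul_pow, sq_sqrt n.cast_nonneg]; norm_num
    exact_mod_cast this
  have hkn : k ≤ n := by nlinarith
  refine ⟨?_, ?_⟩
  · rcases lt_or_ge n 64 with hsmall | hlarge
    · exact exp_div_le_pow_div_factorial_of_nat_le (by omega)
        (sixtyEight_pow_mul_factorial_sq_le n hsmall hn k hkn hk2)
    · obtain ⟨m, rfl⟩ := Nat.exists_eq_add_of_le hkn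
      rw [Nat.add_sub_cancel_left]
      exact exp_div_le_pow_div_factorial_of_sixtyFour_le hlarge hk2
  · calc (n : ℝ) ^ (n - k) / (n - k)! ≤ (n : ℝ) ^ n / n ! :=
          pow_div_factorial_le_pow_div_factorial (Nat.sub_le n k) le_rfl
      _ ≤ exp n / √(2 * π * n) := pow_div_factorial_le_exp_div_sqrt (by omega)
      _ ≤ exp n / √(8 * π / 5 * n) := by gcongr; nlinarith [pi_pos]
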